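/- Let m ≥ 1, let R > 0, and let s ≥ 0 be an integer. There is a constant C = C(s, R) > 0 such that for all t ≥ 0, all b ∈ ℝ, all unit vectors V₁, …, V_s ∈ ℍ^m, and all (X,Z) ∈ ℍ^m × Im(ℍ) with ‖X‖ ≤ R and |Z| ≤ R: |(E_{V₁} E_{V₂} ⋯ E_{V_s} f_{t,b})(X,Z)| ≤ C · B_t(X,Z)^{−s/4} · (1 + |b|)^s, where B_t(X,Z) = (e^{−2t} + ‖X‖²/4)² + |Z|² and f_{t,b} : ℍ^m × Im(ℍ) → ℂ is the complex-valued function f_{t,b}(X,Z) = B_t(X,Z)^{ib} := exp(i·b·log B_t(X,Z)). -/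

import Mathlib

/-!
Call `f` a symbol of order `k` if every word `E_{V₁} ⋯ E_{Vᵢ} f` with `‖Vⱼ‖ ≤ 1` is
`O(B_t^{(k - i)/4})` uniformly in `t`. Since `B_t^{1/4}` dominates `|X|` and `|Z|^{1/2}`, the
coordinates `X`, `Z` and the constant `e^{-2t}` are symbols of orders `1`, `2` and `2`; orders add
under products by the Leibniz rule, so `B_t` has order `4`, and `E_V (B_t⁻¹) = -E_V B_t · B_t⁻²`
gives `B_t⁻¹` order `-4` by induction on the number of derivatives. Finally
`E_V B_t^{ib} = ib · (E_V B_t / B_t) · B_t^{ib}` with `E_V B_t / B_t` of order `-1`, so, again by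
induction, `B_t^{ib}` is a symbol of order `0` whose constant for `s` derivatives is
`O((1 + |b|)^s)`.
-/

open Quaternion

noncomputable section

/-- The imaginary part `Im(q) = (q - q*)/2` of a quaternion. -/
def qIm (q : Quaternion ℝ) : Quaternion ℝ := (q - star q) / 2

/-- The left-invariant vector field `E_V` of the 2-step nilpotent group
`N̄ = ℍ^m × Im(ℍ)`, acting on (`F`-valued) functions on `ℍ^m × ℍ` by
`(E_V f)(X,Z) = Df(X,Z)[(V, Im(X*V)/2)]` (Fréchet derivative). -/
def EV {F : Type*} [NormedAddCommGroup F] [NormedSpace ℝ F] (m : ℕ)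
    (V : Fin m → Quaternion ℝ)
    (f : (Fin m → Quaternion ℝ) × Quaternion ℝ → F) :
    (Fin m → Quaternion ℝ) × Quaternion ℝ → F :=
  fun p => fderiv ℝ f p (V, qIm (∑ j, star (p.1 j) * V j) / 2)

/-- Iterated left-invariant derivative `E_{V₁} E_{V₂} ⋯ E_{V_s} f`. -/
def EIter {F : Type*} [NormedAddCommGroup F] [NormedSpace ℝ F] (m : ℕ) :
    List (Fin m → Quaternion ℝ) →
      ((Fin m → Quaternion ℝ) × Quaternion ℝ → F) →
      ((Fin m → Quaternion ℝ) × Quaternion ℝ → F)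
  | [], f => f
  | V :: Vs, f => EV m V (EIter m Vs f)

/-- `B_t(X,Z) = (e^{-2t} + ‖X‖²/4)² + |Z|²` as a function on `ℍ^m × ℍ`,
where `‖X‖² = ∑ⱼ |Xⱼ|²`. -/
def BtF (m : ℕ) (t : ℝ) : (Fin m → Quaternion ℝ) × Quaternion ℝ → ℝ :=
  fun p => (Real.exp (-2 * t) + (∑ j, Quaternion.normSq (p.1 j)) / 4) ^ 2
    + Quaternion.normSq p.2

/-- The complex-valued function `f_{t,b} = B_t^{ib} = exp(i·b·log B_t)`. -/
def ftb (m : ℕ) (t b : ℝ) : (Fin m → Quaternion ℝ) × Quaternion ℝ → ℂ :=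
  fun p => Complex.exp (Complex.I * b * Real.log (BtF m t p))

abbrev Nbar (m : ℕ) := (Fin m → ℍ[ℝ]) × ℍ[ℝ]

lemma Quaternion.norm_two : ‖(2 : ℍ[ℝ])‖ = 2 := by
  rw [show (2 : ℍ[ℝ]) = ((2 : ℝ) : ℍ[ℝ]) by exact_mod_cast (coe_natCast (R := ℝ) 2).symm,
    norm_coe]
  norm_num

lemma qIm_eq_im (q : ℍ[ℝ]) : qIm q = q.im := by
  have h : q - star q = q.im * 2 := by
    conv_lhs => rw [← q.re_add_im]
    simp only [star_add, star_coe, star_im]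
    noncomm_ring
  have h2 : (2 : ℍ[ℝ]) ≠ 0 := norm_ne_zero_iff.mp (by rw [Quaternion.norm_two]; norm_num)
  rw [qIm, h, mul_div_cancel_right₀ _ h2]

lemma Quaternion.norm_im_le (q : ℍ[ℝ]) : ‖q.im‖ ≤ ‖q‖ := by
  rw [← sq_le_sq₀ (norm_nonneg _) (norm_nonneg _), sq, sq, ← normSq_eq_norm_mul_self,
    ← normSq_eq_norm_mul_self]
  simp only [normSq_def', re_im, imI_im, imJ_im, imK_im]
  nlinarith [sq_nonneg q.re]

def centralDir {m : ℕ} (V : Fin m → ℍ[ℝ]) : (Fin m → ℍ[ℝ]) →L[ℝ] ℍ[ℝ] :=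
  LinearMap.mkContinuous
    { toFun := fun X => qIm (∑ j, star (X j) * V j) / 2
      map_add' := fun X Y => by simp [qIm_eq_im, add_mul, Finset.sum_add_distrib, add_div]
      map_smul' := fun c X => by
        simp only [Pi.smul_apply, Quaternion.star_smul, smul_mul_assoc, ← Finset.smul_sum,
          qIm_eq_im, Quaternion.im_smul, smul_div_assoc, RingHom.id_apply] }
    (m * ‖V‖) fun X => by
      simp only [LinearMap.coe_mk, AddHom.coe_mk, qIm_eq_im, norm_div, Quaternion.norm_two]
      set q := ∑ j, star (X j) * V j
      calc ‖q.im‖ / 2 ≤ ‖q‖ := by linarith [q.norm_im_le, norm_nonneg q.im]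
        _ ≤ ∑ _j : Fin m, ‖X‖ * ‖V‖ := by
          refine (norm_sum_le _ _).trans (Finset.sum_le_sum fun j _ => ?_)
          rw [norm_mul, norm_star]
          gcongr <;> exact norm_le_pi_norm _ j
        _ = m * ‖V‖ * ‖X‖ := by
          rw [Finset.sum_const, Finset.card_univ, Fintype.card_fin, nsmul_eq_mul]; ring

lemma norm_centralDir_le {m : ℕ} (V : Fin m → ℍ[ℝ]) : ‖centralDir V‖ ≤ m * ‖V‖ :=
  LinearMap.mkContinuous_norm_le _ (by positivity) _

lemma norm_le_one_of_sum_normSq_eq_one {m : ℕ} {V : Fin m → ℍ[ℝ]}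
    (hV : ∑ k, normSq (V k) = 1) : ‖V‖ ≤ 1 := by
  refine (pi_norm_le_iff_of_nonneg zero_le_one).2 fun j => ?_
  have h : ‖V j‖ * ‖V j‖ ≤ 1 := by
    rw [← normSq_eq_norm_mul_self, ← hV]
    exact Finset.single_le_sum (fun i _ => normSq_nonneg) (Finset.mem_univ j)
  nlinarith [norm_nonneg (V j)]

section LeftInvariantCalculus

variable {m : ℕ} {E F G : Type*} [NormedAddCommGroup E] [NormedSpace ℝ E]
  [NormedAddCommGroup F] [NormedSpace ℝ F] [NormedAddCommGroup G] [NormedSpace ℝ G]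
  (V : Fin m → ℍ[ℝ])

lemma EV_const (c : F) : EV m V (fun _ => c) = fun _ => 0 := by
  funext p; simp [EV]

lemma EV_fst : EV m V Prod.fst = fun _ => V := by
  funext p; simp [EV, fderiv_fst]

lemma EV_snd : EV m V Prod.snd = fun p => centralDir V p.1 := by
  funext p; simp only [EV, fderiv_snd, ContinuousLinearMap.coe_snd']; rfl

lemma EV_add {f g : Nbar m → F} (hf : Differentiable ℝ f) (hg : Differentiable ℝ g) :
    EV m V (fun p => f p + g p) = fun p => EV m V f p + EV m V g p := by
  funext p; simp only [EV, fderiv_fun_add (hf p) (hg p), add_apply]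

lemma EV_clm (L : F →L[ℝ] G) {f : Nbar m → F} (hf : Differentiable ℝ f) :
    EV m V (fun p => L (f p)) = fun p => L (EV m V f p) := by
  funext p
  have h : HasFDerivAt (fun q => L (f q)) (L.comp (fderiv ℝ f p)) p :=
    L.hasFDerivAt.comp p (hf p).hasFDerivAt
  simp only [EV, h.fderiv, ContinuousLinearMap.comp_apply]

lemma EV_bilin (bl : E →L[ℝ] F →L[ℝ] G) {f : Nbar m → E} {g : Nbar m → F}
    (hf : Differentiable ℝ f) (hg : Differentiable ℝ g) :
    EV m V (fun p => bl (f p) (g p)) = fun p => bl (EV m V f p) (g p) + bl (f p) (EV m V g p) := by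
  funext p
  have hbl : HasFDerivAt (fun q => bl (f q)) (bl.comp (fderiv ℝ f p)) p :=
    bl.hasFDerivAt.comp p (hf p).hasFDerivAt
  simp only [EV, (hbl.clm_apply (hg p).hasFDerivAt).fderiv]
  simp [add_comm]

lemma EV_comp_of_hasDerivAt {f : Nbar m → ℝ} {g g' : ℝ → F} (hf : Differentiable ℝ f)
    (hg : ∀ p, HasDerivAt g (g' (f p)) (f p)) :
    EV m V (fun p => g (f p)) = fun p => EV m V f p • g' (f p) := by
  funext p
  have h : HasFDerivAt (fun q => g (f q)) ((fderiv ℝ f p).smulRight (g' (f p))) p :=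
    (hg p).hasFDerivAt.comp p (hf p).hasFDerivAt
  simp only [EV, h.fderiv, ContinuousLinearMap.smulRight_apply]

lemma EV_inv {f : Nbar m → ℝ} (hf : Differentiable ℝ f) (hne : ∀ p, f p ≠ 0) :
    EV m V (fun p => (f p)⁻¹) = fun p => -(EV m V f p * ((f p)⁻¹ * (f p)⁻¹)) := by
  rw [EV_comp_of_hasDerivAt (g := fun x => x⁻¹) (g' := fun x => -(x ^ 2)⁻¹) V hf
    fun p => hasDerivAt_inv (hne p)]
  funext p
  rw [smul_eq_mul, sq, mul_inv]
  ring

end LeftInvariantCalculus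

lemma le_mul_rpow_of_pow_four_le {x c B : ℝ} (hx : 0 ≤ x) (hc : 0 ≤ c) (hB : 0 ≤ B) (n : ℕ)
    (h : x ^ 4 ≤ c ^ 4 * B ^ n) : x ≤ c * B ^ ((n : ℝ) / 4) := by
  have h4 : ∀ y : ℝ, 0 ≤ y → (y ^ 4) ^ ((4 : ℕ) : ℝ)⁻¹ = y := fun y hy =>
    Real.pow_rpow_inv_natCast hy (by norm_num)
  calc x = (x ^ 4) ^ ((4 : ℕ) : ℝ)⁻¹ := (h4 x hx).symm
    _ ≤ (c ^ 4 * B ^ n) ^ ((4 : ℕ) : ℝ)⁻¹ := by gcongr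
    _ = c * B ^ ((n : ℝ) / 4) := by
      rw [Real.mul_rpow (by positivity) (by positivity), h4 c hc, ← Real.rpow_natCast_mul hB]
      norm_num [div_eq_mul_inv]

section Gauge

variable {m : ℕ} (t : ℝ) (p : Nbar m)

lemma sum_normSq_nonneg : 0 ≤ ∑ j, normSq (p.1 j) :=
  Finset.sum_nonneg fun _ _ => normSq_nonneg

lemma sq_le_BtF : (Real.exp (-2 * t) + (∑ j, normSq (p.1 j)) / 4) ^ 2 ≤ BtF m t p :=
  le_add_of_nonneg_right normSq_nonneg

lemma BtF_pos : 0 < BtF m t p :=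
  (pow_pos (by linarith [Real.exp_pos (-2 * t), sum_normSq_nonneg p]) 2).trans_le (sq_le_BtF t p)

lemma exp_le_BtF_rpow : Real.exp (-2 * t) ≤ BtF m t p ^ ((2 : ℝ) / 4) := by
  have h := le_mul_rpow_of_pow_four_le (Real.exp_pos (-2 * t)).le zero_le_one (BtF_pos t p).le 2
  simp only [Nat.cast_ofNat, one_pow, one_mul] at h
  refine h ?_
  calc Real.exp (-2 * t) ^ 4 = (Real.exp (-2 * t) ^ 2) ^ 2 := by ring
    _ ≤ BtF m t p ^ 2 := by
      gcongr
      refine le_trans ?_ (sq_le_BtF t p)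
      gcongr
      linarith [sum_normSq_nonneg p]

lemma norm_fst_le_BtF_rpow : ‖p.1‖ ≤ 2 * BtF m t p ^ ((1 : ℝ) / 4) := by
  refine (pi_norm_le_iff_of_nonneg
    (mul_nonneg zero_le_two (Real.rpow_nonneg (BtF_pos t p).le _))).2 fun j => ?_
  have h := le_mul_rpow_of_pow_four_le (norm_nonneg (p.1 j)) zero_le_two (BtF_pos t p).le 1
  rw [Nat.cast_one, pow_one] at h
  refine h ?_
  have hj : normSq (p.1 j) ≤ ∑ i, normSq (p.1 i) :=
    Finset.single_le_sum (fun i _ => normSq_nonneg) (Finset.mem_univ j)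
  calc ‖p.1 j‖ ^ 4 = normSq (p.1 j) ^ 2 := by rw [normSq_eq_norm_mul_self]; ring
    _ ≤ (4 * (Real.exp (-2 * t) + (∑ i, normSq (p.1 i)) / 4)) ^ 2 := by
      gcongr
      · exact normSq_nonneg
      · linarith [Real.exp_pos (-2 * t)]
    _ ≤ 2 ^ 4 * BtF m t p := by nlinarith [sq_le_BtF t p]

lemma norm_snd_le_BtF_rpow : ‖p.2‖ ≤ BtF m t p ^ ((2 : ℝ) / 4) := by
  have h := le_mul_rpow_of_pow_four_le (norm_nonneg p.2) zero_le_one (BtF_pos t p).le 2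
  simp only [Nat.cast_ofNat, one_pow, one_mul] at h
  refine h ?_
  calc ‖p.2‖ ^ 4 = normSq p.2 ^ 2 := by rw [normSq_eq_norm_mul_self]; ring
    _ ≤ BtF m t p ^ 2 := by
      gcongr
      · exact normSq_nonneg
      · exact le_add_of_nonneg_left (sq_nonneg _)

end Gauge

/-- `‖V‖` is the sup norm of `Fin m → ℍ`, so every Euclidean unit vector is admissible. -/
def IsSymbol {F : Type*} [NormedAddCommGroup F] [NormedSpace ℝ F] (m : ℕ) (t C : ℝ) :
    ℝ → ℕ → (Nbar m → F) → Prop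
  | k, 0, f => ∀ p, ‖f p‖ ≤ C * BtF m t p ^ (k / 4)
  | k, J + 1, f => (∀ p, ‖f p‖ ≤ C * BtF m t p ^ (k / 4)) ∧ Differentiable ℝ f ∧
      ∀ V : Fin m → ℍ[ℝ], ‖V‖ ≤ 1 → IsSymbol m t C (k - 1) J (EV m V f)

namespace IsSymbol

variable {m : ℕ} {t C C' k l : ℝ} {J : ℕ} {E F G : Type*}
  [NormedAddCommGroup E] [NormedSpace ℝ E] [NormedAddCommGroup F] [NormedSpace ℝ F]
  [NormedAddCommGroup G] [NormedSpace ℝ G] {f g : Nbar m → F}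

lemma norm_le (h : IsSymbol m t C k J f) (p : Nbar m) : ‖f p‖ ≤ C * BtF m t p ^ (k / 4) := by
  cases J with
  | zero => exact h p
  | succ J => exact h.1 p

lemma const_nonneg (h : IsSymbol m t C k J f) : 0 ≤ C :=
  (mul_nonneg_iff_of_pos_right (Real.rpow_pos_of_pos (BtF_pos t 0) _)).1
    ((norm_nonneg _).trans (h.norm_le 0))

lemma differentiable (h : IsSymbol m t C k (J + 1) f) : Differentiable ℝ f := h.2.1

lemma EV (h : IsSymbol m t C k (J + 1) f) {V : Fin m → ℍ[ℝ]} (hV : ‖V‖ ≤ 1) :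
    IsSymbol m t C (k - 1) J (_root_.EV m V f) := h.2.2 V hV

lemma of_succ (h : IsSymbol m t C k (J + 1) f) : IsSymbol m t C k J f := by
  induction J generalizing k f with
  | zero => exact h.1
  | succ J ih => exact ⟨h.1, h.2.1, fun V hV => ih (h.EV hV)⟩

lemma of_EV (hf : Differentiable ℝ f) (h0 : ∀ p, ‖f p‖ ≤ C * BtF m t p ^ (k / 4))
    (hEV : ∀ J, ∀ V : Fin m → ℍ[ℝ], ‖V‖ ≤ 1 → IsSymbol m t C (k - 1) J (_root_.EV m V f)) :
    ∀ J, IsSymbol m t C k J f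
  | 0 => h0
  | J + 1 => ⟨h0, hf, hEV J⟩

lemma mono (h : IsSymbol m t C k J f) (hC : C ≤ C') : IsSymbol m t C' k J f := by
  have h0 : ∀ {k} {g : Nbar m → F}, IsSymbol m t C k 0 g → IsSymbol m t C' k 0 g :=
    fun hg p => (hg p).trans (by gcongr; exact Real.rpow_nonneg (BtF_pos t p).le _)
  induction J generalizing k f with
  | zero => exact h0 h
  | succ J ih => exact ⟨h0 h.1, h.2.1, fun V hV => ih (h.EV hV)⟩

lemma add (hf : IsSymbol m t C k J f) (hg : IsSymbol m t C' k J g) :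
    IsSymbol m t (C + C') k J (fun p => f p + g p) := by
  have h0 : ∀ {k} {f g : Nbar m → F}, IsSymbol m t C k 0 f → IsSymbol m t C' k 0 g →
      IsSymbol m t (C + C') k 0 (fun p => f p + g p) :=
    fun hf hg p => (norm_add_le _ _).trans
      ((add_le_add (hf p) (hg p)).trans_eq (add_mul _ _ _).symm)
  induction J generalizing k f g with
  | zero => exact h0 hf hg
  | succ J ih =>
    refine ⟨h0 hf.1 hg.1, hf.differentiable.add hg.differentiable, fun V hV => ?_⟩
    rw [EV_add V hf.differentiable hg.differentiable]
    exact ih (hf.EV hV) (hg.EV hV)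

lemma clm (L : F →L[ℝ] G) (hf : IsSymbol m t C k J f) :
    IsSymbol m t (‖L‖ * C) k J (fun p => L (f p)) := by
  have h0 : ∀ {k} {f : Nbar m → F}, IsSymbol m t C k 0 f →
      IsSymbol m t (‖L‖ * C) k 0 (fun p => L (f p)) := fun hf p =>
    (L.le_opNorm _).trans
      ((mul_le_mul_of_nonneg_left (hf p) (norm_nonneg L)).trans_eq (mul_assoc _ _ _).symm)
  induction J generalizing k f with
  | zero => exact h0 hf
  | succ J ih =>
    refine ⟨h0 hf.1, L.differentiable.comp hf.differentiable, fun V hV => ?_⟩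
    rw [EV_clm V L hf.differentiable]
    exact ih (hf.EV hV)

lemma neg (hf : IsSymbol m t C k J f) : IsSymbol m t C k J (fun p => -f p) := by
  have h := (hf.clm (-ContinuousLinearMap.id ℝ F)).mono (C' := C)
    (by rw [norm_neg]; exact mul_le_of_le_one_left hf.const_nonneg ContinuousLinearMap.norm_id_le)
  simpa using h

lemma bilin (bl : E →L[ℝ] F →L[ℝ] G) {C₁ C₂ : ℝ} {f : Nbar m → E} {g : Nbar m → F}
    (hf : IsSymbol m t C₁ k J f) (hg : IsSymbol m t C₂ l J g) :
    IsSymbol m t (2 ^ J * ‖bl‖ * C₁ * C₂) (k + l) J (fun p => bl (f p) (g p)) := by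
  have h0 : ∀ {J' k l} {f : Nbar m → E} {g : Nbar m → F}, IsSymbol m t C₁ k J' f →
      IsSymbol m t C₂ l J' g → ∀ (n : ℕ) p,
      ‖bl (f p) (g p)‖ ≤ 2 ^ n * ‖bl‖ * C₁ * C₂ * BtF m t p ^ ((k + l) / 4) := by
    intro J' k l f g hf hg n p
    have hB := BtF_pos t p
    have := hf.const_nonneg
    have := hg.const_nonneg
    calc ‖bl (f p) (g p)‖ ≤ ‖bl‖ * ‖f p‖ * ‖g p‖ := bl.le_opNorm₂ _ _
      _ ≤ ‖bl‖ * (C₁ * BtF m t p ^ (k / 4)) * (C₂ * BtF m t p ^ (l / 4)) := by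
        gcongr
        exacts [hf.norm_le p, hg.norm_le p]
      _ = 1 * ‖bl‖ * C₁ * C₂ * BtF m t p ^ ((k + l) / 4) := by
        rw [add_div, Real.rpow_add hB]; ring
      _ ≤ 2 ^ n * ‖bl‖ * C₁ * C₂ * BtF m t p ^ ((k + l) / 4) := by
        gcongr
        exact one_le_pow₀ one_le_two
  induction J generalizing k l f g with
  | zero => exact h0 hf hg 0
  | succ J ih =>
    refine ⟨h0 hf hg (J + 1),
      (bl.differentiable.comp hf.differentiable).clm_apply hg.differentiable, fun V hV => ?_⟩
    rw [EV_bilin V bl hf.differentiable hg.differentiable]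
    have h₁ := ih (hf.EV hV) hg.of_succ
    have h₂ := ih hf.of_succ (hg.EV hV)
    rw [sub_add_eq_add_sub] at h₁
    rw [← add_sub_assoc] at h₂
    exact (h₁.add h₂).mono (le_of_eq (by ring))

lemma smul {C₁ C₂ : ℝ} {φ : Nbar m → ℝ} (hφ : IsSymbol m t C₁ k J φ) (hf : IsSymbol m t C₂ l J f) :
    IsSymbol m t (2 ^ J * C₁ * C₂) (k + l) J (fun p => φ p • f p) := by
  refine (hφ.bilin (ContinuousLinearMap.lsmul ℝ ℝ) hf).mono ?_
  have := hφ.const_nonneg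
  have := hf.const_nonneg
  have : ‖(ContinuousLinearMap.lsmul ℝ ℝ : ℝ →L[ℝ] F →L[ℝ] F)‖ ≤ 1 :=
    ContinuousLinearMap.opNorm_lsmul_le
  calc 2 ^ J * ‖(ContinuousLinearMap.lsmul ℝ ℝ : ℝ →L[ℝ] F →L[ℝ] F)‖ * C₁ * C₂
      ≤ 2 ^ J * 1 * C₁ * C₂ := by gcongr
    _ = 2 ^ J * C₁ * C₂ := by ring

lemma mul {C₁ C₂ : ℝ} {φ ψ : Nbar m → ℝ} (hφ : IsSymbol m t C₁ k J φ)
    (hψ : IsSymbol m t C₂ l J ψ) : IsSymbol m t (2 ^ J * C₁ * C₂) (k + l) J (fun p => φ p * ψ p) :=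
  hφ.smul hψ

end IsSymbol

lemma IsSymbol.EIter {m : ℕ} {t C k : ℝ} {F : Type*} [NormedAddCommGroup F] [NormedSpace ℝ F]
    {f : Nbar m → F} {M : List (Fin m → ℍ[ℝ])} (hM : ∀ V ∈ M, ‖V‖ ≤ 1) {J : ℕ}
    (h : IsSymbol m t C k (J + M.length) f) : IsSymbol m t C (k - M.length) J (EIter m M f) := by
  induction M generalizing J with
  | nil =>
    simp only [List.length_nil, Nat.cast_zero, sub_zero, add_zero] at h ⊢
    exact h
  | cons V M ih =>
    rw [List.length_cons, ← add_assoc, add_right_comm] at h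
    have := (ih (fun W hW => hM W (List.mem_cons_of_mem V hW)) h).EV (hM V List.mem_cons_self)
    rw [sub_sub] at this
    rw [List.length_cons, Nat.cast_succ]
    exact this

section Atoms

variable {m : ℕ} (t : ℝ) {F : Type*} [NormedAddCommGroup F] [NormedSpace ℝ F]

lemma isSymbol_const {c : F} {C k : ℝ} (hc : ∀ p, ‖c‖ ≤ C * BtF m t p ^ (k / 4)) (J : ℕ) :
    IsSymbol m t C k J (fun _ => c) := by
  induction J generalizing c k with
  | zero => exact hc
  | succ J ih =>
    refine ⟨hc, differentiable_const c, fun V _ => ?_⟩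
    have hC : 0 ≤ C := IsSymbol.const_nonneg (J := 0) hc
    rw [EV_const]
    exact ih fun p => by simpa using mul_nonneg hC (Real.rpow_nonneg (BtF_pos t p).le _)

lemma isSymbol_fst (J : ℕ) : IsSymbol m t 2 1 J Prod.fst :=
  IsSymbol.of_EV differentiable_fst (fun p => norm_fst_le_BtF_rpow t p) (fun J V hV => by
    rw [EV_fst]
    exact isSymbol_const t (fun _ => by norm_num; linarith) J) J

lemma isSymbol_snd (J : ℕ) : IsSymbol m t (2 * m + 1) 2 J Prod.snd :=
  IsSymbol.of_EV differentiable_snd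
    (fun p => (norm_snd_le_BtF_rpow t p).trans (le_mul_of_one_le_left
      (Real.rpow_nonneg (BtF_pos t p).le _) (by linarith [(Nat.cast_nonneg m : (0:ℝ) ≤ m)])))
    (fun J V hV => by
      rw [EV_snd, show (2 : ℝ) - 1 = 1 by norm_num]
      refine ((isSymbol_fst t J).clm (centralDir V)).mono ?_
      have := (norm_centralDir_le V).trans (mul_le_of_le_one_right (Nat.cast_nonneg m) hV)
      linarith) J

end Atoms

def quarterInner (m : ℕ) : (Fin m → ℍ[ℝ]) →L[ℝ] (Fin m → ℍ[ℝ]) →L[ℝ] ℝ :=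
  (4 : ℝ)⁻¹ • ∑ j, (innerSL ℝ).bilinearComp
    (ContinuousLinearMap.proj j) (ContinuousLinearMap.proj j)

lemma BtF_eq_bilin (m : ℕ) (t : ℝ) : BtF m t = fun p =>
    (Real.exp (-2 * t) + quarterInner m p.1 p.1) * (Real.exp (-2 * t) + quarterInner m p.1 p.1)
      + innerSL ℝ p.2 p.2 := by
  funext p
  simp [BtF, quarterInner, normSq_eq_norm_mul_self, sq, div_eq_inv_mul]

lemma isSymbol_BtF (m J : ℕ) : ∃ C, ∀ t, IsSymbol m t C 4 J (BtF m t) := ⟨_, fun t => by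
  have hX := (isSymbol_fst t J).bilin (quarterInner m) (isSymbol_fst t J)
  rw [one_add_one_eq_two] at hX
  have hu := (isSymbol_const t (c := Real.exp (-2 * t)) (C := 1) (fun p => by
    rw [one_mul, Real.norm_of_nonneg (Real.exp_pos _).le]; exact exp_le_BtF_rpow t p) J).add hX
  have hB := (hu.mul hu).add ((isSymbol_snd t J).bilin (innerSL ℝ) (isSymbol_snd t J))
  rw [show (2 : ℝ) + 2 = 4 by norm_num] at hB
  rw [BtF_eq_bilin]
  exact hB⟩

lemma differentiable_BtF (m : ℕ) (t : ℝ) : Differentiable ℝ (BtF m t) :=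
  let ⟨_, h⟩ := isSymbol_BtF m 1
  (h t).differentiable

lemma norm_inv_BtF {m : ℕ} (t : ℝ) (p : Nbar m) :
    ‖(BtF m t p)⁻¹‖ = BtF m t p ^ ((-4 : ℝ) / 4) := by
  rw [Real.norm_of_nonneg (inv_nonneg.2 (BtF_pos t p).le), show (-4 : ℝ) / 4 = -1 by norm_num,
    Real.rpow_neg_one]

lemma isSymbol_inv_BtF (m J : ℕ) : ∃ C, ∀ t, IsSymbol m t C (-4) J (fun p => (BtF m t p)⁻¹) := by
  induction J with
  | zero => exact ⟨1, fun t p => by rw [one_mul, norm_inv_BtF]⟩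
  | succ J ih =>
    obtain ⟨C, hC⟩ := ih
    obtain ⟨CB, hB⟩ := isSymbol_BtF m (J + 1)
    refine ⟨max 1 (2 ^ J * CB * (2 ^ J * C * C)), fun t => ⟨fun p => ?_,
      (hB t).differentiable.inv fun p => (BtF_pos t p).ne', fun V hV => ?_⟩⟩
    · rw [norm_inv_BtF]
      exact le_mul_of_one_le_left (Real.rpow_nonneg (BtF_pos t p).le _) (le_max_left _ _)
    · rw [EV_inv V (hB t).differentiable fun p => (BtF_pos t p).ne']
      have h := (((hB t).EV hV).mul ((hC t).mul (hC t))).neg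
      rw [show (4 : ℝ) - 1 + (-4 + -4) = -4 - 1 by norm_num] at h
      exact h.mono (le_max_right _ _)

lemma isSymbol_logDeriv_BtF (m J : ℕ) : ∃ C, ∀ t (V : Fin m → ℍ[ℝ]), ‖V‖ ≤ 1 →
    IsSymbol m t C (-1) J (fun p => EV m V (BtF m t) p * (BtF m t p)⁻¹) := by
  obtain ⟨CB, hB⟩ := isSymbol_BtF m (J + 1)
  obtain ⟨C, hC⟩ := isSymbol_inv_BtF m J
  exact ⟨_, fun t V hV => by
    have h := ((hB t).EV hV).mul (hC t)
    rwa [show (4 : ℝ) - 1 + -4 = -1 by norm_num] at h⟩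

lemma hasDerivAt_cexp_mul_log (c : ℂ) {x : ℝ} (hx : 0 < x) :
    HasDerivAt (fun y : ℝ => Complex.exp (c * Real.log y))
      (Complex.exp (c * Real.log x) * (c * ((x⁻¹ : ℝ) : ℂ))) x :=
  ((Real.hasDerivAt_log hx.ne').ofReal_comp.const_mul c).cexp

lemma EV_ftb {m : ℕ} (V : Fin m → ℍ[ℝ]) (t b : ℝ) :
    EV m V (ftb m t b) = fun p =>
      (Complex.I * b) * ((EV m V (BtF m t) p * (BtF m t p)⁻¹) • ftb m t b p) := by
  refine (EV_comp_of_hasDerivAt (g := fun y : ℝ => Complex.exp (Complex.I * b * Real.log y))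
    (g' := fun y => Complex.exp (Complex.I * b * Real.log y) * (Complex.I * b * ((y⁻¹ : ℝ) : ℂ)))
    V (differentiable_BtF m t) fun p => hasDerivAt_cexp_mul_log _ (BtF_pos t p)).trans (funext fun p => ?_)
  simp only [ftb, Complex.real_smul]
  push_cast
  ring

lemma norm_ftb {m : ℕ} (t b : ℝ) (p : Nbar m) : ‖ftb m t b p‖ = 1 := by
  rw [ftb, Complex.norm_exp]
  simp

lemma isSymbol_ftb (m J : ℕ) : ∃ C, ∀ t b, IsSymbol m t (C * (1 + |b|) ^ J) 0 J (ftb m t b) := by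
  induction J with
  | zero => exact ⟨1, fun t b p => by simp [norm_ftb]⟩
  | succ J ih =>
    obtain ⟨C, hC⟩ := ih
    obtain ⟨Cq, hq⟩ := isSymbol_logDeriv_BtF m J
    refine ⟨max 1 (2 ^ J * Cq * C), fun t b => ⟨fun p => ?_, fun p =>
      (hasDerivAt_cexp_mul_log _ (BtF_pos t p)).differentiableAt.comp p (differentiable_BtF m t p),
      fun V hV => ?_⟩⟩
    · rw [norm_ftb, zero_div, Real.rpow_zero, mul_one]
      exact one_le_mul_of_one_le_of_one_le (le_max_left _ _)
        (one_le_pow₀ (le_add_of_nonneg_right (abs_nonneg b)))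
    · rw [EV_ftb V t b]
      have h := ((hq t V hV).smul (hC t b)).clm (ContinuousLinearMap.mul ℝ ℂ (Complex.I * b))
      rw [show (-1 : ℝ) + 0 = 0 - 1 by norm_num] at h
      simp only [ContinuousLinearMap.mul_apply'] at h
      refine h.mono ?_
      have hA := ((hq t V hV).smul (hC t b)).const_nonneg
      have hL : ‖ContinuousLinearMap.mul ℝ ℂ (Complex.I * b)‖ ≤ 1 + |b| :=
        (ContinuousLinearMap.opNorm_mul_apply_le ℝ ℂ _).trans (by simp)
      calc ‖ContinuousLinearMap.mul ℝ ℂ (Complex.I * b)‖ * (2 ^ J * Cq * (C * (1 + |b|) ^ J))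
          ≤ (1 + |b|) * (2 ^ J * Cq * (C * (1 + |b|) ^ J)) := by gcongr
        _ = 2 ^ J * Cq * C * (1 + |b|) ^ (J + 1) := by ring
        _ ≤ max 1 (2 ^ J * Cq * C) * (1 + |b|) ^ (J + 1) := by gcongr; exact le_max_right _ _

theorem stmt_14_general (m : ℕ) (R : ℝ) (s : ℕ) :
    ∃ C : ℝ, 0 < C ∧ ∀ t : ℝ, 0 ≤ t → ∀ b : ℝ,
      ∀ V : Fin s → Fin m → Quaternion ℝ,
      (∀ i, ∑ k, Quaternion.normSq (V i k) = 1) →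
      ∀ X : Fin m → Quaternion ℝ, ∀ Z : Quaternion ℝ, Z.re = 0 →
        Real.sqrt (∑ k, Quaternion.normSq (X k)) ≤ R →
        Real.sqrt (Quaternion.normSq Z) ≤ R →
        ‖EIter m (List.ofFn V) (ftb m t b) (X, Z)‖
          ≤ C * BtF m t (X, Z) ^ (-(s : ℝ) / 4) * (1 + |b|) ^ s := by
  obtain ⟨C, hC⟩ := isSymbol_ftb m s
  refine ⟨max C 1, by positivity, fun t _ b V hV X Z _ _ _ => ?_⟩
  have hM : ∀ W ∈ List.ofFn V, ‖W‖ ≤ 1 := by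
    simpa [List.mem_ofFn] using fun i => norm_le_one_of_sum_normSq_eq_one (hV i)
  have h := (IsSymbol.EIter hM (J := 0) (by simpa using hC t b)).norm_le (X, Z)
  simp only [List.length_ofFn, zero_sub] at h
  refine h.trans ?_
  rw [neg_div, mul_right_comm]
  gcongr
  · exact Real.rpow_nonneg (BtF_pos t _).le _
  · exact le_max_left _ _

/-- for each integer `s ≥ 0` and `R > 0` there is `C = C(s,R) > 0`
with `|E_{V₁} ⋯ E_{V_s} (B_t^{ib})| ≤ C · B_t^{-s/4} · (1+|b|)^s` for all `t ≥ 0`,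
all `b ∈ ℝ`, all unit vectors `V₁, …, V_s ∈ ℍ^m`, and all `(X,Z) ∈ ℍ^m × Im(ℍ)`
with `‖X‖ ≤ R`, `|Z| ≤ R`. -/
theorem stmt_14 (m : ℕ) (hm : 1 ≤ m) (R : ℝ) (hR : 0 < R) (s : ℕ) :
    ∃ C : ℝ, 0 < C ∧ ∀ t : ℝ, 0 ≤ t → ∀ b : ℝ,
      ∀ V : Fin s → Fin m → Quaternion ℝ,
      (∀ i, ∑ k, Quaternion.normSq (V i k) = 1) →
      ∀ X : Fin m → Quaternion ℝ, ∀ Z : Quaternion ℝ, Z.re = 0 →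
        Real.sqrt (∑ k, Quaternion.normSq (X k)) ≤ R →
        Real.sqrt (Quaternion.normSq Z) ≤ R →
        ‖EIter m (List.ofFn V) (ftb m t b) (X, Z)‖
          ≤ C * BtF m t (X, Z) ^ (-(s : ℝ) / 4) * (1 + |b|) ^ s :=
  stmt_14_general m R s
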